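/- Let q ≥ 2, let (P, L) be a finite projective plane of order q, and let B be a projective bundle. Suppose L' ⊆ L is a set of r lines and O' ⊆ B is a set of s ovals, not both empty, such that every point of P belongs to an even number of elements of the disjoint union L' ⊔ O'. Then r + s ≥ q + 2. -/

import Mathlib

/-- A finite projective plane of order `q`, given by its set of lines (each line a
finite set of points of the ambient point type `P`): any two distinct points lie on
exactly one common line, any two distinct lines meet in exactly one point, there are
four points no three of which are collinear, and every line has `q + 1` points. -/
structure IsProjectivePlane (q : ℕ) {P : Type} [DecidableEq P] (L : Finset (Finset P)) : Prop where
  exists_unique_line : ∀ p₁ p₂ : P, p₁ ≠ p₂ → ∃! ℓ, ℓ ∈ L ∧ p₁ ∈ ℓ ∧ p₂ ∈ ℓ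
  exists_unique_point : ∀ ℓ₁ ∈ L, ∀ ℓ₂ ∈ L, ℓ₁ ≠ ℓ₂ → ∃! p, p ∈ ℓ₁ ∧ p ∈ ℓ₂
  nondeg : ∃ a b c d : P, a ≠ b ∧ a ≠ c ∧ a ≠ d ∧ b ≠ c ∧ b ≠ d ∧ c ≠ d ∧
      ∀ ℓ ∈ L, (ℓ ∩ ({a, b, c, d} : Finset P)).card ≤ 2
  card_line : ∀ ℓ ∈ L, ℓ.card = q + 1

/-- An oval: a set of `q + 1` points such that every line contains at most two of them. -/
def IsOval (q : ℕ) {P : Type} [DecidableEq P] (L : Finset (Finset P)) (O : Finset P) : Prop :=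
  O.card = q + 1 ∧ ∀ ℓ ∈ L, (ℓ ∩ O).card ≤ 2

/-- A projective bundle: a set of `q² + q + 1` ovals, any two of which meet in
exactly one point. -/
def IsProjectiveBundle (q : ℕ) {P : Type} [DecidableEq P] (L : Finset (Finset P))
    (B : Finset (Finset P)) : Prop :=
  B.card = q ^ 2 + q + 1 ∧ (∀ o ∈ B, IsOval q L o) ∧
    ∀ o₁ ∈ B, ∀ o₂ ∈ B, o₁ ≠ o₂ → (o₁ ∩ o₂).card = 1

/-!
Lines and bundle ovals play symmetric roles: each family consists of `q + 1`-sets, any two points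
lie in exactly one member and any two members meet in exactly one point, and every member of one
family is an oval for the other. Write `F ⊆ D₁`, `G ⊆ D₂` for the two parts of the even cover.

Summing the (even) point degrees along a block `A ∉ F` of `D₁` shows that `|F|` and the number of
members of `G` tangent to `A` have the same parity. Expanding `∑ |A ∩ O| |A ∩ O'|` shows that two
ovals meeting in one point have an odd number of common tangents; as the `q + 1` tangents of an
oval `c` have `q² + q` tangent ovals besides `c` in total, `c` shares exactly one tangent with each
other oval.

If `|F|` is even and `c ∈ G`, each of the `q + 1` tangents of `c` lies in `F` or touches a second
member of `G`, and each member of `G` other than `c` touches just one of them, so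
`q + 1 ≤ |F| + |G| - 1`. If `|F|` and `|G|` are both odd, every block of `D₂ \ G` touches a member
of `F`, so `q² + q + 1 ≤ (q + 1) |F| + |G|`, and symmetrically; together with
`|F| + |G| ≤ q + 1` this forces `q ≤ 1`.
-/

open Finset

variable {P : Type} [DecidableEq P]

lemma card_filter_eq_one_of_existsUnique {α : Type*} {s : Finset α} {p : α → Prop}
    [DecidablePred p] (h : ∃! a, a ∈ s ∧ p a) : #{a ∈ s | p a} = 1 := by
  simpa [card_eq_one_iff_existsUnique] using h

lemma odd_iff_eq_one_of_le_two {n : ℕ} (hn : n ≤ 2) : Odd n ↔ n = 1 := by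
  interval_cases n <;> decide

lemma sum_card_inter_eq_sum_card_filter_mem (S : Finset (Finset P)) (X : Finset P) :
    ∑ A ∈ S, #(A ∩ X) = ∑ x ∈ X, #{A ∈ S | x ∈ A} := by
  have h := sum_card_bipartiteAbove_eq_sum_card_bipartiteBelow (s := S) (t := X) (fun A x => x ∈ A)
  simp only [bipartiteAbove, bipartiteBelow, filter_mem_eq_inter] at h
  simpa only [inter_comm] using h

def tangents (D : Finset (Finset P)) (X : Finset P) : Finset (Finset P) :=
  {A ∈ D | #(A ∩ X) = 1}

lemma filter_card_inter_eq_one_eq_tangents (D : Finset (Finset P)) (X : Finset P) :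
    {A ∈ D | #(X ∩ A) = 1} = tangents D X :=
  filter_congr fun A _ => by rw [inter_comm]

def CoversEvenly (F G : Finset (Finset P)) : Prop :=
  ∀ p : P, Even (#{A ∈ F | p ∈ A} + #{A ∈ G | p ∈ A})

lemma CoversEvenly.symm {F G : Finset (Finset P)} (h : CoversEvenly F G) : CoversEvenly G F :=
  fun p => add_comm #{A ∈ F | p ∈ A} _ ▸ h p

/-- The axioms of a projective plane of order `q` except non-degeneracy. Both the lines of a
projective plane and the ovals of a projective bundle satisfy them. -/
structure IsPlaneDesign (q : ℕ) (D : Finset (Finset P)) : Prop where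
  card_block : ∀ A ∈ D, #A = q + 1
  existsUnique_block : ∀ x y : P, x ≠ y → ∃! A, A ∈ D ∧ x ∈ A ∧ y ∈ A
  card_inter : ∀ A ∈ D, ∀ B ∈ D, A ≠ B → #(A ∩ B) = 1

namespace IsPlaneDesign

variable {q : ℕ} {D : Finset (Finset P)}

lemma card_filter_mem_mem (hD : IsPlaneDesign q D) {x y : P} (hxy : x ≠ y) :
    #{A ∈ D | x ∈ A ∧ y ∈ A} = 1 :=
  card_filter_eq_one_of_existsUnique (hD.existsUnique_block x y hxy)

lemma sum_card_inter_of_notMem (hD : IsPlaneDesign q D) {x : P} {X : Finset P} (hx : x ∉ X) :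
    ∑ A ∈ D with x ∈ A, #(A ∩ X) = #X := by
  rw [sum_card_inter_eq_sum_card_filter_mem, card_eq_sum_ones]
  refine sum_congr rfl fun z hz => ?_
  rw [filter_filter]
  exact hD.card_filter_mem_mem (ne_of_mem_of_not_mem hz hx).symm

lemma card_filter_mem_mul [Fintype P] (hD : IsPlaneDesign q D) (x : P) :
    #{A ∈ D | x ∈ A} * q = Fintype.card P - 1 := by
  have h := hD.sum_card_inter_of_notMem (notMem_erase x (univ : Finset P))
  rwa [card_erase_of_mem (mem_univ x), card_univ,
    sum_congr rfl fun A hA => by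
      rw [inter_erase, inter_univ, card_erase_of_mem (mem_filter.1 hA).2,
        hD.card_block A (mem_filter.1 hA).1, Nat.add_sub_cancel],
    sum_const, smul_eq_mul] at h

variable [Fintype P]

lemma card_filter_mem (hD : IsPlaneDesign q D) (hq : 0 < q)
    (hP : Fintype.card P = q ^ 2 + q + 1) (x : P) : #{A ∈ D | x ∈ A} = q + 1 :=
  Nat.eq_of_mul_eq_mul_right hq <| by rw [hD.card_filter_mem_mul, hP]; ring_nf; omega

lemma card_eq (hD : IsPlaneDesign q D) (hq : 0 < q) (hP : Fintype.card P = q ^ 2 + q + 1) :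
    #D = q ^ 2 + q + 1 := by
  have h := sum_card (fun x => hD.card_filter_mem hq hP x)
  rw [sum_congr rfl hD.card_block, sum_const, smul_eq_mul, hP] at h
  exact Nat.eq_of_mul_eq_mul_right (Nat.succ_pos q) h

lemma sum_card_inter_filter_mem (hD : IsPlaneDesign q D) (hq : 0 < q)
    (hP : Fintype.card P = q ^ 2 + q + 1) (x : P) (X : Finset P) :
    ∑ A ∈ D with x ∈ A, #(A ∩ X) = #X + if x ∈ X then q else 0 := by
  rw [sum_card_inter_eq_sum_card_filter_mem, ← sum_ite_eq' X x (fun _ => q), card_eq_sum_ones,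
    ← sum_add_distrib]
  refine sum_congr rfl fun z _ => ?_
  rw [filter_filter]
  by_cases hzx : z = x
  · subst hzx
    simp only [and_self, if_true, hD.card_filter_mem hq hP]
    omega
  · rw [if_neg hzx, add_zero, hD.card_filter_mem_mem (Ne.symm hzx)]

lemma card_filter_tangents_mem (hD : IsPlaneDesign q D) (hq : 0 < q)
    (hP : Fintype.card P = q ^ 2 + q + 1) {O : Finset P} (hO : IsOval q D O) {y : P}
    (hy : y ∈ O) : #{A ∈ tangents D O | y ∈ A} = 1 := by
  -- Through `y` pass `q + 1` blocks, meeting `O` in `2q + 1` points counted with multiplicity.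
  have h : ∑ A ∈ D with y ∈ A, (#(A ∩ O) + if #(A ∩ O) = 1 then 1 else 0)
      = ∑ A ∈ D with y ∈ A, 2 := by
    refine sum_congr rfl fun A hA => ?_
    have h₁ : 0 < #(A ∩ O) := card_pos.2 ⟨y, mem_inter.2 ⟨(mem_filter.1 hA).2, hy⟩⟩
    have h₂ := hO.2 A (mem_filter.1 hA).1
    split_ifs <;> omega
  rw [sum_add_distrib, ← card_filter, hD.sum_card_inter_filter_mem hq hP, if_pos hy, hO.1,
    sum_const, hD.card_filter_mem hq hP, smul_eq_mul, filter_filter] at h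
  rw [tangents, filter_filter, filter_congr fun A _ => and_comm]
  omega

lemma card_tangents (hD : IsPlaneDesign q D) (hq : 0 < q) (hP : Fintype.card P = q ^ 2 + q + 1)
    {O : Finset P} (hO : IsOval q D O) : #(tangents D O) = q + 1 := by
  have h := sum_card_inter_eq_sum_card_filter_mem (tangents D O) O
  have h₁ : ∀ A ∈ tangents D O, #(A ∩ O) = 1 := fun A hA => (mem_filter.1 hA).2
  rwa [sum_congr rfl h₁,
    sum_congr rfl fun y hy => hD.card_filter_tangents_mem hq hP hO hy, sum_const, sum_const,
    smul_eq_mul, smul_eq_mul, mul_one, mul_one, hO.1] at h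

lemma odd_card_tangents_tangents (hD : IsPlaneDesign q D) (hq : 0 < q)
    (hP : Fintype.card P = q ^ 2 + q + 1) {O O' : Finset P} (hO : IsOval q D O)
    (hO' : IsOval q D O') (hOO' : #(O ∩ O') = 1) : Odd #(tangents (tangents D O) O') := by
  have hsum : ∑ A ∈ D, #(A ∩ O) * #(A ∩ O') = (q + 1) * (q + 1) + q := by
    calc ∑ A ∈ D, #(A ∩ O) * #(A ∩ O')
        = ∑ A ∈ D, ∑ x ∈ A ∩ O, #(A ∩ O') := by simp only [sum_const, smul_eq_mul]
      _ = ∑ x ∈ O, ∑ A ∈ D with x ∈ A, #(A ∩ O') :=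
          sum_comm' fun A x => by simp only [mem_inter, mem_filter]; tauto
      _ = ∑ x ∈ O, (#O' + if x ∈ O' then q else 0) :=
          sum_congr rfl fun x _ => hD.sum_card_inter_filter_mem hq hP x O'
      _ = (q + 1) * (q + 1) + q := by
          rw [sum_add_distrib, sum_ite_mem, sum_const, sum_const, hOO', hO.1, hO'.1]
          simp
  have hodd : Odd ((q + 1) * (q + 1) + q) := by
    have h : (q + 1) * (q + 1) + q = q * (q + 1) + 2 * q + 1 := by ring
    rw [h]
    exact ((Nat.even_mul_succ_self q).add (even_two_mul q)).add_one
  rw [← hsum, odd_sum_iff_odd_card_odd] at hodd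
  convert hodd using 2
  rw [tangents, tangents, filter_filter]
  refine filter_congr fun A hA => ?_
  rw [Nat.odd_mul, odd_iff_eq_one_of_le_two (hO.2 A hA), odd_iff_eq_one_of_le_two (hO'.2 A hA)]

end IsPlaneDesign

namespace IsProjectivePlane

variable {q : ℕ} {L : Finset (Finset P)}

lemma isPlaneDesign (hL : IsProjectivePlane q L) : IsPlaneDesign q L where
  card_block := hL.card_line
  existsUnique_block := hL.exists_unique_line
  card_inter ℓ₁ h₁ ℓ₂ h₂ hne := by
    rw [← filter_mem_eq_inter]
    exact card_filter_eq_one_of_existsUnique (hL.exists_unique_point ℓ₁ h₁ ℓ₂ h₂ hne)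

lemma card_points [Fintype P] (hL : IsProjectivePlane q L) :
    Fintype.card P = q ^ 2 + q + 1 := by
  obtain ⟨a, b, c, d, hab, hac, -, hbc, -, -, hnd⟩ := hL.nondeg
  obtain ⟨ℓ, ⟨hℓ, haℓ, hbℓ⟩, -⟩ := hL.exists_unique_line a b hab
  have hcℓ : c ∉ ℓ := by
    intro hcℓ
    have h : {a, b, c} ⊆ ℓ ∩ {a, b, c, d} := by
      simp [insert_subset_iff, haℓ, hbℓ, hcℓ]
    have := (card_le_card h).trans (hnd ℓ hℓ)
    rw [card_eq_three.2 ⟨a, b, c, hab, hac, hbc, rfl⟩] at this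
    omega
  -- Every line through `c` meets `ℓ` in exactly one point, so `c` is on `q + 1` lines.
  have hpencil : #{m ∈ L | c ∈ m} = q + 1 := by
    rw [← hL.card_line ℓ hℓ, ← hL.isPlaneDesign.sum_card_inter_of_notMem hcℓ, card_eq_sum_ones]
    refine sum_congr rfl fun m hm =>
      (hL.isPlaneDesign.card_inter m (mem_filter.1 hm).1 ℓ hℓ ?_).symm
    rintro rfl
    exact hcℓ (mem_filter.1 hm).2
  have h := hL.isPlaneDesign.card_filter_mem_mul c
  rw [hpencil] at h
  have := Fintype.card_pos_iff.2 ⟨c⟩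
  rw [← Nat.sub_add_cancel this, ← h]
  ring

end IsProjectivePlane

lemma IsProjectiveBundle.isPlaneDesign [Fintype P] {q : ℕ} {L B : Finset (Finset P)}
    (hB : IsProjectiveBundle q L B) (hP : Fintype.card P = q ^ 2 + q + 1) :
    IsPlaneDesign q B := by
  obtain ⟨hcard, hoval, hinter⟩ := hB
  have heq : ∀ o ∈ B, ∀ o' ∈ B, ∀ x y : P, x ≠ y → x ∈ o → y ∈ o → x ∈ o' → y ∈ o' → o = o' := by
    intro o ho o' ho' x y hxy hxo hyo hxo' hyo'
    by_contra hne
    have := hinter o ho o' ho' hne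
    exact (one_lt_card.2 ⟨x, mem_inter.2 ⟨hxo, hxo'⟩, y, mem_inter.2 ⟨hyo, hyo'⟩, hxy⟩).ne' this
  -- Distinct ovals share no two points, and together the ovals have as many ordered pairs of
  -- distinct points as `P` has.
  have hcover : B.biUnion offDiag = (univ : Finset P).offDiag := by
    refine eq_of_subset_of_card_le (fun z hz => ?_) (le_of_eq ?_)
    · obtain ⟨o, -, hz⟩ := mem_biUnion.1 hz
      exact mem_offDiag.2 ⟨mem_univ _, mem_univ _, (mem_offDiag.1 hz).2.2⟩
    · rw [card_biUnion, sum_congr rfl fun o ho => by rw [offDiag_card, (hoval o ho).1],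
        offDiag_card, card_univ, hP, sum_const, smul_eq_mul, hcard]
      · simp only [← Nat.mul_sub_one, Nat.add_sub_cancel]
        ring
      · intro o ho o' ho' hne
        refine disjoint_left.2 fun ⟨x, y⟩ h h' => hne ?_
        rw [mem_offDiag] at h h'
        exact heq o ho o' ho' x y h.2.2 h.1 h.2.1 h'.1 h'.2.1
  refine ⟨fun o ho => (hoval o ho).1, fun x y hxy => ?_, hinter⟩
  have hmem : (x, y) ∈ (univ : Finset P).offDiag := mem_offDiag.2 ⟨mem_univ x, mem_univ y, hxy⟩
  obtain ⟨o, ho, hxy'⟩ := mem_biUnion.1 (hcover ▸ hmem)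
  rw [mem_offDiag] at hxy'
  exact ⟨o, ⟨ho, hxy'.1, hxy'.2.1⟩, fun o' ⟨ho', hxo', hyo'⟩ =>
    heq o' ho' o ho x y hxy hxo' hyo' hxy'.1 hxy'.2.1⟩

namespace IsPlaneDesign

variable {q : ℕ} {D₁ D₂ F G : Finset (Finset P)}

lemma isOval_of_mem (h₁ : IsPlaneDesign q D₁) (h₁₂ : ∀ C ∈ D₂, IsOval q D₁ C) {A : Finset P}
    (hA : A ∈ D₁) : IsOval q D₂ A :=
  ⟨h₁.card_block A hA, fun C hC => by rw [inter_comm]; exact (h₁₂ C hC).2 A hA⟩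

lemma even_card_add_card_tangents (h₁ : IsPlaneDesign q D₁) (hF : F ⊆ D₁) {A : Finset P}
    (hA : A ∈ D₁) (hAF : A ∉ F) (hG : ∀ C ∈ G, #(C ∩ A) ≤ 2) (heven : CoversEvenly F G) :
    Even (#F + #(tangents G A)) := by
  have hsum : Even (∑ B ∈ F, #(B ∩ A) + ∑ C ∈ G, #(C ∩ A)) := by
    rw [sum_card_inter_eq_sum_card_filter_mem, sum_card_inter_eq_sum_card_filter_mem,
      ← sum_add_distrib]
    exact even_sum _ fun p _ => heven p
  have hF' : ∑ B ∈ F, #(B ∩ A) = #F := by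
    rw [card_eq_sum_ones]
    exact sum_congr rfl fun B hB => h₁.card_inter B (hF hB) A hA (ne_of_mem_of_not_mem hB hAF)
  have hG' : {C ∈ G | Odd #(C ∩ A)} = tangents G A :=
    filter_congr fun C hC => odd_iff_eq_one_of_le_two (hG C hC)
  rw [Nat.even_add, hF', even_sum_iff_even_card_odd, hG'] at hsum
  rwa [Nat.even_add]

variable [Fintype P]

lemma card_tangents_tangents (hq : 0 < q) (hP : Fintype.card P = q ^ 2 + q + 1)
    (h₁ : IsPlaneDesign q D₁) (h₂ : IsPlaneDesign q D₂) (h₁₂ : ∀ C ∈ D₂, IsOval q D₁ C)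
    (h₂₁ : ∀ A ∈ D₁, IsOval q D₂ A) {c o : Finset P} (hc : c ∈ D₂) (ho : o ∈ D₂)
    (hne : o ≠ c) : #(tangents (tangents D₁ c) o) = 1 := by
  set T := tangents D₁ c
  have hT : #T = q + 1 := h₁.card_tangents hq hP (h₁₂ c hc)
  -- Each count is odd, and the counts add up to the number of ovals other than `c`.
  have hpos : ∀ o ∈ D₂.erase c, 1 ≤ #(tangents T o) := fun o ho =>
    (h₁.odd_card_tangents_tangents hq hP (h₁₂ c hc) (h₁₂ o (mem_of_mem_erase ho))
      (h₂.card_inter c hc o (mem_of_mem_erase ho) (ne_of_mem_erase ho).symm)).pos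
  have hswap : ∑ o ∈ D₂.erase c, #(tangents T o)
      = ∑ m ∈ T, #{o ∈ D₂.erase c | #(m ∩ o) = 1} :=
    (sum_card_bipartiteAbove_eq_sum_card_bipartiteBelow _).symm
  have hm : ∀ m ∈ T, #{o ∈ D₂.erase c | #(m ∩ o) = 1} = q := by
    intro m hm
    have hcm : c ∈ tangents D₂ m :=
      mem_filter.2 ⟨hc, by rw [inter_comm]; exact (mem_filter.1 hm).2⟩
    rw [filter_erase, filter_card_inter_eq_one_eq_tangents, card_erase_of_mem hcm,
      h₂.card_tangents hq hP (h₂₁ m (mem_filter.1 hm).1), Nat.add_sub_cancel]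
  have hsum : ∑ o ∈ D₂.erase c, 1 = ∑ o ∈ D₂.erase c, #(tangents T o) := by
    rw [hswap, sum_congr rfl hm, ← card_eq_sum_ones, sum_const, smul_eq_mul, hT,
      card_erase_of_mem hc, h₂.card_eq hq hP]
    ring_nf
    omega
  exact ((sum_eq_sum_iff_of_le hpos).1 hsum o (mem_erase.2 ⟨hne, ho⟩)).symm

lemma add_two_le_card_add_card_of_even (hq : 0 < q) (hP : Fintype.card P = q ^ 2 + q + 1)
    (h₁ : IsPlaneDesign q D₁) (h₂ : IsPlaneDesign q D₂) (h₁₂ : ∀ C ∈ D₂, IsOval q D₁ C)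
    (h₂₁ : ∀ A ∈ D₁, IsOval q D₂ A) (hF : F ⊆ D₁) (hG : G ⊆ D₂) (heven : CoversEvenly F G)
    (hFeven : Even #F) (hGne : G.Nonempty) : q + 2 ≤ #F + #G := by
  obtain ⟨c, hcG⟩ := hGne
  set T := tangents D₁ c
  have hT : #T = q + 1 := h₁.card_tangents hq hP (h₁₂ c (hG hcG))
  have hcT : ∀ m ∈ T, c ∈ tangents G m := fun m hm =>
    mem_filter.2 ⟨hcG, by rw [inter_comm]; exact (mem_filter.1 hm).2⟩
  -- A tangent of `c` outside `F` is, by parity, tangent to a second member of `G`.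
  have hexcess_pos : ∀ m ∈ T, m ∉ F → 1 ≤ #(tangents G m) - 1 := by
    intro m hm hmF
    have hpar := h₁.even_card_add_card_tangents hF (mem_filter.1 hm).1 hmF
      (fun C hC => (h₂₁ m (mem_filter.1 hm).1).2 C (hG hC)) heven
    obtain ⟨k, hk⟩ := (Nat.even_add.1 hpar).1 hFeven
    have hpos := card_pos.2 ⟨c, hcT m hm⟩
    omega
  have hexcess : ∑ m ∈ T, (#(tangents G m) - 1) = #G - 1 := by
    have hm : ∀ m ∈ T, #(tangents G m) - 1 = #{o ∈ G.erase c | #(o ∩ m) = 1} := by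
      intro m hm
      rw [filter_erase]
      exact (card_erase_of_mem (hcT m hm)).symm
    have hswap : ∑ m ∈ T, #{o ∈ G.erase c | #(o ∩ m) = 1}
        = ∑ o ∈ G.erase c, #{m ∈ T | #(o ∩ m) = 1} :=
      sum_card_bipartiteAbove_eq_sum_card_bipartiteBelow _
    rw [sum_congr rfl hm, hswap, ← card_erase_of_mem hcG, card_eq_sum_ones]
    refine sum_congr rfl fun o ho => ?_
    rw [filter_card_inter_eq_one_eq_tangents]
    exact card_tangents_tangents hq hP h₁ h₂ h₁₂ h₂₁ (hG hcG) (hG (mem_of_mem_erase ho))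
      (ne_of_mem_erase ho)
  have hG₁ : 0 < #G := card_pos.2 ⟨c, hcG⟩
  have := calc
    q + 1 = #{m ∈ T | m ∈ F} + #{m ∈ T | m ∉ F} := by
        rw [card_filter_add_card_filter_not, hT]
    _ ≤ #F + ∑ m ∈ T with m ∉ F, (#(tangents G m) - 1) := by
        refine add_le_add (card_le_card fun m hm => (mem_filter.1 hm).2) ?_
        rw [card_eq_sum_ones]
        exact sum_le_sum fun m hm => hexcess_pos m (mem_filter.1 hm).1 (mem_filter.1 hm).2
    _ ≤ #F + ∑ m ∈ T, (#(tangents G m) - 1) := by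
        gcongr
        exact filter_subset _ _
    _ = #F + (#G - 1) := by rw [hexcess]
  omega

lemma le_mul_card_add_card_of_odd (hq : 0 < q) (hP : Fintype.card P = q ^ 2 + q + 1)
    (h₂ : IsPlaneDesign q D₂) (h₁₂ : ∀ C ∈ D₂, IsOval q D₁ C)
    (h₂₁ : ∀ A ∈ D₁, IsOval q D₂ A) (hF : F ⊆ D₁) (hG : G ⊆ D₂) (heven : CoversEvenly F G)
    (hGodd : Odd #G) : q ^ 2 + q + 1 ≤ (q + 1) * #F + #G := by
  have hpos : ∀ c ∈ D₂ \ G, 1 ≤ #(tangents F c) := by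
    intro c hc
    rw [mem_sdiff] at hc
    have hpar := h₂.even_card_add_card_tangents hG hc.1 hc.2
      (fun ℓ hℓ => (h₁₂ c hc.1).2 ℓ (hF hℓ)) heven.symm
    obtain ⟨k, hk⟩ := hGodd
    obtain ⟨j, hj⟩ := hpar
    omega
  have hcount : ∑ c ∈ D₂, #(tangents F c) = #F * (q + 1) := by
    have hswap : ∑ c ∈ D₂, #(tangents F c) = ∑ ℓ ∈ F, #{c ∈ D₂ | #(ℓ ∩ c) = 1} :=
      (sum_card_bipartiteAbove_eq_sum_card_bipartiteBelow _).symm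
    rw [hswap, ← smul_eq_mul, ← sum_const]
    refine sum_congr rfl fun ℓ hℓ => ?_
    rw [filter_card_inter_eq_one_eq_tangents]
    exact h₂.card_tangents hq hP (h₂₁ ℓ (hF hℓ))
  calc q ^ 2 + q + 1 = #(D₂ \ G) + #G := by rw [card_sdiff_add_card_eq_card hG, h₂.card_eq hq hP]
    _ ≤ ∑ c ∈ D₂ \ G, #(tangents F c) + #G := by
        rw [card_eq_sum_ones]
        gcongr with c hc
        exact hpos c hc
    _ ≤ ∑ c ∈ D₂, #(tangents F c) + #G := by
        gcongr
        exact sdiff_subset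
    _ = (q + 1) * #F + #G := by rw [hcount, mul_comm]

end IsPlaneDesign

/-- Let `L' ⊆ L` be a set of `r` lines and `O' ⊆ B` a set of `s` ovals of a
projective bundle `B`, not both empty, such that every point belongs to an even number of
elements of the disjoint union `L' ⊔ O'`. Then `r + s ≥ q + 2`. -/
theorem statement_12 (q : ℕ) (hq : 2 ≤ q) (P : Type) [Fintype P] [DecidableEq P]
    (L : Finset (Finset P)) (hL : IsProjectivePlane q L)
    (B : Finset (Finset P)) (hB : IsProjectiveBundle q L B)
    (L' O' : Finset (Finset P)) (hL' : L' ⊆ L) (hO' : O' ⊆ B)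
    (hne : L'.Nonempty ∨ O'.Nonempty)
    (heven : ∀ p : P,
      Even ((L'.filter fun ℓ => p ∈ ℓ).card + (O'.filter fun o => p ∈ o).card)) :
    q + 2 ≤ L'.card + O'.card := by
  have hq₀ : 0 < q := by omega
  have hP := hL.card_points
  have hLd := hL.isPlaneDesign
  have hBd := hB.isPlaneDesign hP
  have hBL : ∀ o ∈ B, IsOval q L o := hB.2.1
  have hLB : ∀ ℓ ∈ L, IsOval q B ℓ := fun ℓ hℓ => hLd.isOval_of_mem hBL hℓ
  have heven : CoversEvenly L' O' := heven
  have hlines := hLd.add_two_le_card_add_card_of_even hq₀ hP hBd hBL hLB hL' hO' heven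
  have hovals := hBd.add_two_le_card_add_card_of_even hq₀ hP hLd hLB hBL hO' hL' heven.symm
  rcases Nat.even_or_odd #L' with hr | hr <;> rcases Nat.even_or_odd #O' with hs | hs
  · rcases hne with hne | hne
    · linarith [hovals hs hne]
    · exact hlines hr hne
  · exact hlines hr (card_pos.1 hs.pos)
  · linarith [hovals hs (card_pos.1 hr.pos)]
  · nlinarith [hBd.le_mul_card_add_card_of_odd hq₀ hP hBL hLB hL' hO' heven hs,
      hLd.le_mul_card_add_card_of_odd hq₀ hP hLB hBL hO' hL' heven.symm hr]
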